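/- Let X^n be the stationary geometric-sticky Markov chain with parameter α and base distribution p. For distinct x, y ∈ X and indices m1, m2 with 2 ≤ m1, m1+2 ≤ m2 ≤ n−1, the probability that X_{m1} = x, X_{m2} = y, and neither x nor y appears at any other index equals (1−α)⁴·p_x·p_y·(1−p_x−p_y)³·(1−(1−α)(p_x+p_y))^{n−5}. -/

import Mathlib

/-!
Restrict the path to a set `S i` at each time `i`: `{a}` at time `m1`, `{b}` at time `m2` and
`{a, b}ᶜ` elsewhere. Summing out the last state, a step from any `w ∈ S i` into `S (i + 1)` has
total weight `α·[w ∈ S (i + 1)] + (1 - α)·p(S (i + 1))`, which does not depend on `w` because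
consecutive sets are equal or disjoint. So the path sum is `p({a, b}ᶜ)` times one factor per
step: `(1 - α) p_a` and `(1 - α) p_b` for entering the singletons, `(1 - α)(1 - p_a - p_b)` for
leaving them, and `1 - (1 - α)(p_a + p_b)` for each of the remaining `n - 5` steps.
-/

open scoped Classical

/-- The probability that the stationary geometric-sticky Markov chain with stickiness
parameter `α` and base distribution `p` (i.e. `X_1 ~ p` and
`Pr(X_i = z | X_{i-1} = y) = α·1[z=y] + (1-α)·p z`) produces the sample path `x`. -/
noncomputable def stickyProb {X : Type*} [DecidableEq X] (α : ℝ) (p : X → ℝ) {n : ℕ}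
    (x : Fin n → X) : ℝ :=
  (if h : 0 < n then p (x ⟨0, h⟩) else 1) *
  ∏ i : Fin n, if i.val = 0 then 1 else
    ((if x i = x ⟨i.val - 1, lt_of_le_of_lt (Nat.pred_le _) i.isLt⟩ then α else 0)
      + (1 - α) * p (x i))

open Finset

section PathWeight

variable {X R : Type*} [CommSemiring R]

def pathWeight (μ : X → R) (K : X → X → R) {m : ℕ} (x : Fin (m + 1) → X) : R :=
  μ (x 0) * ∏ i : Fin m, K (x i.castSucc) (x i.succ)

lemma pathWeight_snoc (μ : X → R) (K : X → X → R) {m : ℕ} (y : Fin (m + 1) → X) (z : X) :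
    pathWeight μ K (Fin.snoc y z : Fin (m + 2) → X) =
      pathWeight μ K y * K (y (Fin.last m)) z := by
  rw [pathWeight, pathWeight, Fin.prod_univ_castSucc, ← Fin.castSucc_zero]
  simp [mul_assoc, Fin.succ_castSucc, -Fin.castSucc_succ]

lemma forall_snoc_mem_iff (S : ℕ → Finset X) {m : ℕ} (y : Fin (m + 1) → X) (z : X) :
    (∀ i : Fin (m + 2), (Fin.snoc y z : Fin (m + 2) → X) i ∈ S i) ↔
      (∀ i : Fin (m + 1), y i ∈ S i) ∧ z ∈ S (m + 1) := by
  simp [Fin.forall_fin_succ' (n := m + 1)]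

theorem sum_ite_forall_mem_pathWeight [Fintype X] [DecidableEq X] (μ : X → R) (K : X → X → R)
    (S : ℕ → Finset X) (c : ℕ → R) (hc : ∀ i, ∀ w ∈ S i, ∑ z ∈ S (i + 1), K w z = c i)
    (m : ℕ) :
    ∑ x : Fin (m + 1) → X, (if ∀ i : Fin (m + 1), x i ∈ S i then pathWeight μ K x else 0)
      = (∑ z ∈ S 0, μ z) * ∏ i ∈ range m, c i := by
  induction m with
  | zero =>
    rw [← (Equiv.funUnique (Fin 1) X).symm.sum_comp]
    simp [pathWeight, sum_ite_mem]
  | succ m ih =>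
    rw [← (Fin.snocEquiv fun _ => X).sum_comp, Fintype.sum_prod_type_right, prod_range_succ,
      ← mul_assoc, ← ih, sum_mul]
    refine sum_congr rfl fun y _ => ?_
    simp only [Fin.snocEquiv, Equiv.coe_fn_mk, forall_snoc_mem_iff, pathWeight_snoc]
    split_ifs with hy
    · rw [← hc m _ (hy (Fin.last m)), mul_sum]
      simp [hy, sum_ite_mem]
    · simp [hy]

end PathWeight

section Sticky

variable {X : Type*} [DecidableEq X] (α : ℝ) (p : X → ℝ)

def stickyStep (w z : X) : ℝ :=
  (if z = w then α else 0) + (1 - α) * p z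

lemma stickyProb_eq_pathWeight {m : ℕ} (x : Fin (m + 1) → X) :
    stickyProb α p x = pathWeight p (stickyStep α p) x := by
  rw [stickyProb, pathWeight, dif_pos m.succ_pos, Fin.prod_univ_succ]
  simp only [Fin.val_zero, if_true, one_mul, Fin.val_succ, Nat.add_one_ne_zero, if_false,
    Nat.add_sub_cancel]
  rfl

lemma sum_stickyStep (T : Finset X) (w : X) :
    ∑ z ∈ T, stickyStep α p w z = (if w ∈ T then α else 0) + (1 - α) * ∑ z ∈ T, p z := by
  simp [stickyStep, sum_add_distrib, mul_sum]

noncomputable def stickyFactor (S : ℕ → Finset X) (i : ℕ) : ℝ :=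
  (if S i = S (i + 1) then α else 0) + (1 - α) * ∑ z ∈ S (i + 1), p z

theorem sum_ite_forall_mem_stickyProb [Fintype X] (S : ℕ → Finset X)
    (hS : ∀ i, S i = S (i + 1) ∨ Disjoint (S i) (S (i + 1))) (m : ℕ) :
    ∑ x : Fin (m + 1) → X, (if ∀ i : Fin (m + 1), x i ∈ S i then stickyProb α p x else 0)
      = (∑ z ∈ S 0, p z) * ∏ i ∈ range m, stickyFactor α p S i := by
  simp_rw [stickyProb_eq_pathWeight]
  refine sum_ite_forall_mem_pathWeight p (stickyStep α p) S _ (fun i w hw => ?_) m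
  have hmem : w ∈ S (i + 1) ↔ S i = S (i + 1) := by
    rcases hS i with h | h
    · exact iff_of_true (h ▸ hw) h
    · exact iff_of_false (disjoint_left.mp h hw) fun h' => disjoint_left.mp h hw (h' ▸ hw)
  rw [sum_stickyStep, stickyFactor, if_congr hmem rfl rfl]

end Sticky

lemma prod_eq_pow_mul_prod_of_eq_off {ι M : Type*} [CommMonoid M] [DecidableEq ι]
    {s t : Finset ι} {f : ι → M} {r : M} (hts : t ⊆ s) (hf : ∀ i ∈ s \ t, f i = r) :
    ∏ i ∈ s, f i = r ^ (#s - #t) * ∏ i ∈ t, f i := by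
  rw [← prod_sdiff hts, prod_congr rfl hf, prod_const, card_sdiff_of_subset hts]

section Pinned

variable {X : Type*} [Fintype X] [DecidableEq X]

lemma sum_compl_pair {p : X → ℝ} (hsum : ∑ z, p z = 1) {a b : X} (hab : a ≠ b) :
    ∑ z ∈ {a, b}ᶜ, p z = 1 - p a - p b := by
  rw [← hsum, ← sum_compl_add_sum {a, b}, sum_pair hab]
  ring

def pinnedPattern (a b : X) (j k i : ℕ) : Finset X :=
  if i = j then {a} else if i = k then {b} else {a, b}ᶜ

lemma pinnedPattern_eq_or_disjoint {a b : X} (hab : a ≠ b) (j k i i' : ℕ) :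
    pinnedPattern a b j k i = pinnedPattern a b j k i' ∨
      Disjoint (pinnedPattern a b j k i) (pinnedPattern a b j k i') := by
  unfold pinnedPattern
  split_ifs <;> simp [hab, hab.symm]

lemma forall_mem_pinnedPattern_iff {n : ℕ} (x : Fin n → X) (a b : X) {j k : ℕ} (hj : j < n)
    (hk : k < n) (hjk : j ≠ k) :
    (∀ i : Fin n, x i ∈ pinnedPattern a b j k i) ↔
      x ⟨j, hj⟩ = a ∧ x ⟨k, hk⟩ = b ∧
        ∀ i : Fin n, i.val ≠ j → i.val ≠ k → x i ≠ a ∧ x i ≠ b := by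
  constructor
  · intro h
    refine ⟨by simpa [pinnedPattern] using h ⟨j, hj⟩,
      by simpa [pinnedPattern, hjk.symm] using h ⟨k, hk⟩,
      fun i hij hik => by simpa [pinnedPattern, hij, hik] using h i⟩
  · rintro ⟨ha, hb, hother⟩ i
    unfold pinnedPattern
    split_ifs with hij hik
    · simpa [← ha] using congrArg x (Fin.ext hij)
    · simpa [← hb] using congrArg x (Fin.ext hik)
    · simpa using hother i hij hik

variable (α : ℝ) {p : X → ℝ}

lemma prod_stickyFactor_pinnedPattern (hsum : ∑ z, p z = 1) {a b : X} (hab : a ≠ b)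
    {j k m : ℕ} (hj : 1 ≤ j) (hjk : j + 2 ≤ k) (hkm : k < m) :
    ∏ i ∈ range m, stickyFactor α p (pinnedPattern a b j k) i
      = (1 - α) ^ 4 * p a * p b * (1 - p a - p b) ^ 2
          * (1 - (1 - α) * (p a + p b)) ^ (m - 4) := by
  have hT : {j - 1, j, k - 1, k} ⊆ range m := by
    intro i hi
    simp only [mem_insert, mem_singleton] at hi
    simp only [mem_range]
    omega
  rw [prod_eq_pow_mul_prod_of_eq_off hT (r := 1 - (1 - α) * (p a + p b))]
  · have hcard : #({j - 1, j, k - 1, k} : Finset ℕ) = 4 := by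
      rw [card_insert_of_notMem, card_insert_of_notMem, card_pair] <;> simp <;> omega
    have ha : ({a} : Finset X) ≠ {a, b}ᶜ := fun h => by simpa using Finset.ext_iff.mp h a
    have hb : ({b} : Finset X) ≠ {a, b}ᶜ := fun h => by simpa using Finset.ext_iff.mp h b
    rw [prod_insert (by simp; omega), prod_insert (by simp; omega), prod_pair (by omega),
      card_range, hcard]
    simp (disch := omega) only [stickyFactor, pinnedPattern, if_pos, if_neg, if_true, if_false,
      ha, hb, ha.symm, hb.symm, sum_singleton, sum_compl_pair hsum hab]
    ring
  · intro i hi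
    simp only [mem_sdiff, mem_range, mem_insert, mem_singleton, not_or] at hi
    simp (disch := omega) only [stickyFactor, pinnedPattern, if_neg, if_true,
      sum_compl_pair hsum hab]
    ring

end Pinned

theorem sticky_prob_two_singletons_nonconsecutive
    {X : Type*} [Fintype X] [DecidableEq X] (α : ℝ)
    (p : X → ℝ) (hsum : ∑ z, p z = 1)
    (n : ℕ) (m1 m2 : ℕ) (hm1 : 2 ≤ m1) (hm12 : m1 + 2 ≤ m2) (hm2 : m2 ≤ n - 1)
    (a b : X) (hab : a ≠ b) :
    ∑ x : Fin n → X,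
        (if x ⟨m1 - 1, by omega⟩ = a ∧ x ⟨m2 - 1, by omega⟩ = b ∧
            (∀ i : Fin n, i.val ≠ m1 - 1 → i.val ≠ m2 - 1 → x i ≠ a ∧ x i ≠ b)
          then stickyProb α p x else 0)
      = (1 - α) ^ 4 * p a * p b * (1 - p a - p b) ^ 3
          * (1 - (1 - α) * (p a + p b)) ^ (n - 5) := by
  obtain ⟨m, rfl⟩ : ∃ m, n = m + 1 := ⟨n - 1, by omega⟩
  set S := pinnedPattern a b (m1 - 1) (m2 - 1)
  have hS0 : S 0 = {a, b}ᶜ := by simp (disch := omega) only [S, pinnedPattern, if_neg]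
  simp_rw [← forall_mem_pinnedPattern_iff _ a b _ _ (by omega : m1 - 1 ≠ m2 - 1)]
  rw [sum_ite_forall_mem_stickyProb α p S (fun i => pinnedPattern_eq_or_disjoint hab _ _ _ _) m,
    prod_stickyFactor_pinnedPattern α hsum hab (by omega) (by omega) (by omega), hS0,
    sum_compl_pair hsum hab, show m - 4 = m + 1 - 5 by omega]
  ring
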